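/- arXiv:2602.17309 — 3 statements merged into one kernel-verified Lean document; each statement's English description precedes it below -/
import Mathlib

section
/- For every partial order < (strict) on Σ* and every k ∈ ℕ, the class of k-α languages is a (k+3)-independent property: a language L is k-α if and only if every subset L' ⊆ L with |L'| ≤ k+2 is k-α. -/
def KAlpha {α : Type*} (lt : List α → List α → Prop) (k : ℕ) (L : Set (List α)) : Prop :=
  ∀ u ∈ L, {v ∈ L | lt u v}.encard ≤ k

theorem stmt_2 {α : Type*} (lt : List α → List α → Prop)
    (hirr : ∀ u, ¬ lt u u)
    (htrans : ∀ u v w, lt u v → lt v w → lt u w)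
    (k : ℕ) (L : Set (List α)) :
    KAlpha lt k L ↔ ∀ L' ⊆ L, L'.encard ≤ (k + 2 : ℕ) → KAlpha lt k L' := by
  constructor
  · intro h L' hsub _ u hu
    refine le_trans (Set.encard_mono ?_) (h u (hsub hu))
    intro v hv
    exact ⟨hsub hv.1, hv.2⟩
  · intro h u hu
    by_contra hlt
    push_neg at hlt
    have hk1 : (k + 1 : ℕ∞) ≤ {v ∈ L | lt u v}.encard := Order.add_one_le_of_lt hlt
    obtain ⟨S, hS, hScard⟩ := Set.exists_subset_encard_eq (by exact_mod_cast hk1)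
    have huS : u ∉ S := fun hmem => hirr u (hS hmem).2
    have hsub : insert u S ⊆ L := by
      intro x hx
      rcases hx with rfl | hx
      · exact hu
      · exact (hS hx).1
    have hcard : (insert u S).encard ≤ (k + 2 : ℕ) := by
      rw [Set.encard_insert_of_notMem huS, hScard]
      push_cast
      ring_nf
      exact le_refl _
    have := h (insert u S) hsub hcard u (Set.mem_insert u S)
    have hSsub : S ⊆ {v ∈ insert u S | lt u v} := fun v hv =>
      ⟨Set.mem_insert_of_mem _ hv, (hS hv).2⟩
    have : (k + 1 : ℕ∞) ≤ (k : ℕ∞) := by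
      calc (k + 1 : ℕ∞) = S.encard := by rw [hScard]; push_cast; ring
        _ ≤ _ := Set.encard_mono hSsub
        _ ≤ _ := this
    rw [ENat.add_one_le_iff (by simp)] at this
    exact lt_irrefl _ this
end

section
/- Let < be a strict partial order on Σ* that is right-infinite, meaning for every word u there exists a word v with u < v. Then for every finitely-α language L (i.e., for every u ∈ L the set {v ∈ L : u < v} is finite), there exists a word z ∉ L such that L ∪ {z} is also a finitely-α language. -/
def FinitelyAlpha {α : Type*} (lt : List α → List α → Prop) (L : Set (List α)) : Prop :=
  ∀ u ∈ L, {v ∈ L | lt u v}.Finite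

lemma findMax_aux {β : Type*} (lt : β → β → Prop)
    (hirr : ∀ u, ¬ lt u u)
    (htrans : ∀ u v w, lt u v → lt v w → lt u w) :
    ∀ n (S : Set β) (hS : S.Finite), hS.toFinset.card ≤ n → ∀ m ∈ S,
      ∃ m' ∈ S, (m' = m ∨ lt m m') ∧ ∀ v ∈ S, ¬ lt m' v := by
  intro n
  induction n with
  | zero =>
    intro S hS hcard m hm
    exfalso
    have : m ∈ hS.toFinset := by simpa using hm
    have := Finset.card_pos.mpr ⟨m, this⟩
    omega
  | succ n ih =>
    intro S hS hcard m hm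
    by_cases h : ∃ v ∈ S, lt m v
    · obtain ⟨v0, hv0S, hv0⟩ := h
      have hS' : {v ∈ S | lt m v}.Finite := hS.subset (fun x hx => hx.1)
      have hsub : hS'.toFinset ⊆ hS.toFinset := by
        intro x hx
        simp only [Set.Finite.mem_toFinset] at *
        exact hx.1
      have hmem : m ∈ hS.toFinset := by simpa using hm
      have hnot : m ∉ hS'.toFinset := by
        simp only [Set.Finite.mem_toFinset, Set.mem_setOf_eq]
        exact fun hx => hirr m hx.2
      have hlt : hS'.toFinset.card < hS.toFinset.card :=
        Finset.card_lt_card (Finset.ssubset_iff_of_subset hsub |>.mpr ⟨m, hmem, hnot⟩)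
      obtain ⟨m', hm'S, hm'rel, hm'max⟩ :=
        ih {v ∈ S | lt m v} hS' (by omega) v0 ⟨hv0S, hv0⟩
      refine ⟨m', hm'S.1, Or.inr ?_, fun v hv hltv => ?_⟩
      · rcases hm'rel with rfl | h'
        · exact hv0
        · exact htrans _ _ _ hv0 h'
      · have hltm : lt m m' := by
          rcases hm'rel with rfl | h'
          · exact hv0
          · exact htrans _ _ _ hv0 h'
        exact hm'max v ⟨hv, htrans _ _ _ hltm hltv⟩ hltv
    · exact ⟨m, hm, Or.inl rfl, fun v hv hltv => h ⟨v, hv, hltv⟩⟩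

theorem stmt_4 {α : Type*} (lt : List α → List α → Prop)
    (hirr : ∀ u, ¬ lt u u)
    (htrans : ∀ u v w, lt u v → lt v w → lt u w)
    (hri : ∀ u : List α, ∃ v, lt u v)
    (L : Set (List α)) (hL : FinitelyAlpha lt L) :
    ∃ z ∉ L, FinitelyAlpha lt (L ∪ {z}) := by
  rcases Set.eq_empty_or_nonempty L with rfl | ⟨u, hu⟩
  · refine ⟨[], by simp, fun w hw => ?_⟩
    exact Set.Finite.subset (Set.finite_singleton []) (fun v hv => hv.1.resolve_left (by simp))
  · -- S = insert u {v ∈ L | lt u v}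
    set S : Set (List α) := insert u {v ∈ L | lt u v} with hSdef
    have hSfin : S.Finite := Set.Finite.insert u (hL u hu)
    obtain ⟨m, hmS, hmrel, hmmax⟩ :=
      findMax_aux lt hirr htrans hSfin.toFinset.card S hSfin le_rfl u (Set.mem_insert _ _)
    have hmL : m ∈ L := by
      rcases hmS with rfl | hm'
      · exact hu
      · exact hm'.1
    obtain ⟨z, hz⟩ := hri m
    have huz : lt u z := by
      rcases hmrel with rfl | h'
      · exact hz
      · exact htrans _ _ _ h' hz
    have hzL : z ∉ L := by
      intro hzL
      exact hmmax z (Set.mem_insert_of_mem _ ⟨hzL, huz⟩) hz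
    refine ⟨z, hzL, fun w hw => ?_⟩
    have key : ∀ w', {v ∈ L | lt w' v}.Finite →
        {v ∈ L ∪ {z} | lt w' v}.Finite := by
      intro w' hfin
      have : {v ∈ L ∪ {z} | lt w' v} ⊆ {v ∈ L | lt w' v} ∪ {z} := by
        rintro v ⟨hv | hv, hltv⟩
        · exact Or.inl ⟨hv, hltv⟩
        · exact Or.inr hv
      exact Set.Finite.subset (hfin.union (Set.finite_singleton z)) this
    rcases hw with hwL | hwz
    · exact key w (hL w hwL)
    · have hwz' : w = z := hwz
      refine key w (Set.Finite.subset (hL u hu) ?_)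
      rintro v ⟨hvL, hltv⟩
      rw [hwz'] at hltv
      exact ⟨hvL, htrans _ _ _ huz hltv⟩
end

section
/- If < is a right-infinite strict partial order on Σ*, then no finitely-α language is maximal among finitely-α languages; in particular, the class of finitely-α languages is not an independent property (no finitely-α language is contained in a maximal finitely-α language). -/
theorem key_lemma {α : Type*} (lt : List α → List α → Prop)
    (hirr : ∀ u, ¬ lt u u)
    (htrans : ∀ u v w, lt u v → lt v w → lt u w)
    (hri : ∀ u : List α, ∃ v, lt u v)
    (M : Set (List α)) (hM : FinitelyAlpha lt M) :
    ∃ w ∉ M, FinitelyAlpha lt (M ∪ {w}) := by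
  classical
  have hext : ∃ w ∉ M, {v ∈ M | lt w v}.Finite := by
    rcases M.eq_empty_or_nonempty with hE | ⟨m, hm⟩
    · exact ⟨[], by simp [hE], by simp [hE]⟩
    · set f : List α → List α := fun u => Classical.choose (hri u) with hf
      have hfspec : ∀ u, lt u (f u) := fun u => Classical.choose_spec (hri u)
      set c : ℕ → List α := fun n => f^[n + 1] m with hc
      have hcsucc : ∀ n, c (n + 1) = f (c n) := by
        intro n
        simp [hc, Function.iterate_succ_apply']
      have hmc : ∀ n, lt m (c n) := by
        intro n
        induction n with
        | zero => simpa [hc] using hfspec m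
        | succ k ih => rw [hcsucc]; exact htrans _ _ _ ih (hfspec _)
      have hmono : ∀ i j : ℕ, i < j → lt (c i) (c j) := by
        intro i j hij
        induction j with
        | zero => omega
        | succ k ih =>
          rw [hcsucc]
          rcases Nat.lt_succ_iff_lt_or_eq.mp hij with h | h
          · exact htrans _ _ _ (ih h) (hfspec _)
          · subst h; exact hfspec _
      have hinj : Function.Injective c := by
        intro i j hij
        by_contra hne
        rcases Nat.lt_or_ge i j with h | h
        · exact hirr _ (hij ▸ hmono i j h)
        · exact hirr _ (hij ▸ hmono j i (lt_of_le_of_ne h (Ne.symm hne)))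
      have : ∃ k, c k ∉ M := by
        by_contra h
        push_neg at h
        have hinf : {v ∈ M | lt m v}.Infinite :=
          Set.infinite_of_injective_forall_mem hinj (fun n => ⟨h n, hmc n⟩)
        exact hinf (hM m hm)
      rcases this with ⟨k, hk⟩
      refine ⟨c k, hk, (hM m hm).subset ?_⟩
      rintro v ⟨hv, hlv⟩
      exact ⟨hv, htrans _ _ _ (hmc k) hlv⟩
  rcases hext with ⟨w, hwM, hwfin⟩
  refine ⟨w, hwM, ?_⟩
  intro u hu
  have hufin : {v ∈ M | lt u v}.Finite := by
    rcases hu with hu | hu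
    · exact hM u hu
    · simp only [Set.mem_singleton_iff] at hu; subst hu; exact hwfin
  refine ((hufin.union (Set.finite_singleton w)).subset ?_)
  rintro v ⟨hv | hv, hlv⟩
  · exact Or.inl ⟨hv, hlv⟩
  · exact Or.inr hv

theorem stmt_5 {α : Type*} (lt : List α → List α → Prop)
    (hirr : ∀ u, ¬ lt u u)
    (htrans : ∀ u v w, lt u v → lt v w → lt u w)
    (hri : ∀ u : List α, ∃ v, lt u v) :
    (∀ M : Set (List α), FinitelyAlpha lt M →
      ¬ (∀ w ∉ M, ¬ FinitelyAlpha lt (M ∪ {w}))) ∧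
    (∀ L : Set (List α), FinitelyAlpha lt L →
      ¬ ∃ M : Set (List α), L ⊆ M ∧ FinitelyAlpha lt M ∧
        ∀ w ∉ M, ¬ FinitelyAlpha lt (M ∪ {w})) := by
  constructor
  · intro M hM hmax
    rcases key_lemma lt hirr htrans hri M hM with ⟨w, hwM, hfin⟩
    exact hmax w hwM hfin
  · rintro L _ ⟨M, _, hM, hmax⟩
    rcases key_lemma lt hirr htrans hri M hM with ⟨w, hwM, hfin⟩
    exact hmax w hwM hfin
end
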